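/- For every natural number n and a ∈ ℂ with (2a)_k ≠ 0 for all 0 ≤ k ≤ n: ∑_{k=0}^{n} ((a)_k (−n)_k)/((2a)_k · k!) · 2^k equals 0 if n is odd, and equals (1/2)_{n/2}/(1/2+a)_{n/2} if n is even (provided (1/2+a)_{n/2} ≠ 0), where n/2 denotes the natural number n divided by 2. -/

import Mathlib

set_option maxHeartbeats 1000000

/-- Pochhammer symbol (shifted factorial) of a complex number. -/
noncomputable def poch (a : ℂ) (k : ℕ) : ℂ := ∏ j ∈ Finset.range k, (a + j)

lemma poch_zero (a : ℂ) : poch a 0 = 1 := by simp [poch]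

lemma poch_succ (a : ℂ) (k : ℕ) : poch a (k + 1) = poch a k * (a + k) :=
  Finset.prod_range_succ _ _

lemma poch_neg_nat_zero {n k : ℕ} (h : n < k) : poch (-(n : ℂ)) k = 0 :=
  Finset.prod_eq_zero (Finset.mem_range.mpr h) (by ring)

lemma poch_rel (n k : ℕ) :
    ((n : ℂ) + 1) * ((n : ℂ) + 2) * poch (-(n : ℂ)) k
      = ((k : ℂ) - n - 2) * ((k : ℂ) - n - 1) * poch (-(n : ℂ) - 2) k := by
  induction k with
  | zero => simp only [poch_zero, Nat.cast_zero]; ring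
  | succ k ih =>
      rw [poch_succ, poch_succ]
      push_cast
      linear_combination ((k : ℂ) - n) * ih

noncomputable def Fnk (a : ℂ) (m k : ℕ) : ℂ :=
  poch a k * poch (-(m : ℂ)) k / (poch (2 * a) k * (k.factorial : ℂ)) * (2 : ℂ) ^ k

lemma Fnk_def (a : ℂ) (m k : ℕ) :
    Fnk a m k
      = poch a k * poch (-(m : ℂ)) k / (poch (2 * a) k * (k.factorial : ℂ)) * (2 : ℂ) ^ k := rfl

lemma S_rec (n : ℕ) (a : ℂ) (h : ∀ k ≤ n + 2, poch (2 * a) k ≠ 0) :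
    (2 * a + (n : ℂ) + 1) * ∑ k ∈ Finset.range (n + 3), Fnk a (n + 2) k
      = ((n : ℂ) + 1) * ∑ k ∈ Finset.range (n + 1), Fnk a n k := by
  have hn2 : ((n : ℂ) + 2) ≠ 0 := by
    have h0 : ((n : ℕ) + 2 : ℕ) ≠ 0 := by omega
    exact_mod_cast (Nat.cast_ne_zero (R := ℂ)).mpr h0
  have hn1 : ((n : ℂ) + 1) ≠ 0 := by
    have h0 : ((n : ℕ) + 1 : ℕ) ≠ 0 := by omega
    exact_mod_cast (Nat.cast_ne_zero (R := ℂ)).mpr h0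
  have ecast : (((n + 2 : ℕ)) : ℂ) = (n : ℂ) + 2 := by push_cast; ring
  have ecast2 : (-((n : ℂ) + 2)) = -(n : ℂ) - 2 := by ring
  set G : ℕ → ℂ := fun k => Fnk a (n + 2) k * k * ((k : ℂ) + 2 * a - 1) / ((n : ℂ) + 2)
    with hGdef
  have key : ∀ k ∈ Finset.range (n + 3),
      ((n : ℂ) + 1) * Fnk a n k - (2 * a + (n : ℂ) + 1) * Fnk a (n + 2) k
        = G (k + 1) - G k := by
    intro k hk
    rw [Finset.mem_range] at hk
    by_cases hke : k = n + 2
    · subst hke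
      have hPn : poch (-(n : ℂ)) (n + 2) = 0 := poch_neg_nat_zero (by omega)
      have hB1 : poch (-(((n + 2 : ℕ)) : ℂ)) (n + 2 + 1) = 0 := poch_neg_nat_zero (by omega)
      have hcancel : ∀ X : ℂ, X * ((((n + 2 : ℕ)) : ℂ)) * ((((n + 2 : ℕ)) : ℂ) + 2 * a - 1)
          / ((n : ℂ) + 2) = X * (2 * a + (n : ℂ) + 1) := by
        intro X
        rw [ecast]
        field_simp
        ring
      simp only [hGdef, Fnk, hPn, hB1, mul_zero, zero_mul, zero_div, div_zero, sub_zero,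
        zero_sub, mul_zero, zero_mul]
      rw [hcancel]
      ring
    · have hC : poch (2 * a) k ≠ 0 := h k (by omega)
      have hC1 : poch (2 * a) (k + 1) ≠ 0 := h (k + 1) (by omega)
      rw [poch_succ] at hC1
      have h2ak : (2 * a + (k : ℂ)) ≠ 0 := fun h0 => hC1 (by rw [h0, mul_zero])
      have hkf : ((k.factorial : ℕ) : ℂ) ≠ 0 :=
        (Nat.cast_ne_zero (R := ℂ)).mpr k.factorial_ne_zero
      have hk1 : ((k : ℂ) + 1) ≠ 0 := by
        have h0 : ((k : ℕ) + 1 : ℕ) ≠ 0 := by omega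
        exact_mod_cast (Nat.cast_ne_zero (R := ℂ)).mpr h0
      have hP : poch (-(n : ℂ)) k
          = ((k : ℂ) - n - 2) * ((k : ℂ) - n - 1) * poch (-(n : ℂ) - 2) k
            / (((n : ℂ) + 1) * ((n : ℂ) + 2)) := by
        rw [eq_div_iff (mul_ne_zero hn1 hn2)]
        linear_combination poch_rel n k
      have hF1 : Fnk a (n + 2) (k + 1)
          = Fnk a (n + 2) k * (2 * (a + (k : ℂ)) * ((k : ℂ) - n - 2))
            / ((2 * a + (k : ℂ)) * ((k : ℂ) + 1)) := by
        simp only [Fnk, ecast, ecast2, poch_succ, pow_succ, Nat.factorial_succ,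
          Nat.cast_mul, Nat.cast_add, Nat.cast_one]
        field_simp
        ring
      have hF2 : Fnk a n k
          = Fnk a (n + 2) k * (((k : ℂ) - n - 2) * ((k : ℂ) - n - 1))
            / (((n : ℂ) + 1) * ((n : ℂ) + 2)) := by
        simp only [Fnk, ecast, ecast2, hP]
        field_simp
      simp only [hGdef]
      rw [hF1, hF2]
      push_cast
      field_simp
      ring
  have hext : ∑ k ∈ Finset.range (n + 3), Fnk a n k
      = ∑ k ∈ Finset.range (n + 1), Fnk a n k := by
    rw [Finset.sum_range_succ, Finset.sum_range_succ]
    have h1 : Fnk a n (n + 1) = 0 := by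
      simp [Fnk, poch_neg_nat_zero (show n < n + 1 by omega)]
    have h2 : Fnk a n (n + 2) = 0 := by
      simp [Fnk, poch_neg_nat_zero (show n < n + 2 by omega)]
    rw [h1, h2]; ring
  have tel : ∑ k ∈ Finset.range (n + 3), (G (k + 1) - G k) = G (n + 3) - G 0 :=
    Finset.sum_range_sub G (n + 3)
  have hsum : ((n : ℂ) + 1) * ∑ k ∈ Finset.range (n + 3), Fnk a n k
      - (2 * a + (n : ℂ) + 1) * ∑ k ∈ Finset.range (n + 3), Fnk a (n + 2) k
      = G (n + 3) - G 0 := by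
    rw [Finset.mul_sum, Finset.mul_sum, ← Finset.sum_sub_distrib, ← tel]
    exact Finset.sum_congr rfl key
  have hG0 : G 0 = 0 := by simp [hGdef, Fnk]
  have hGend : G (n + 3) = 0 := by
    have hB : poch (-(((n + 2 : ℕ)) : ℂ)) (n + 3) = 0 := poch_neg_nat_zero (by omega)
    have hF0 : Fnk a (n + 2) (n + 3) = 0 := by rw [Fnk_def, hB]; simp
    simp [hGdef, hF0]
  rw [hext, hG0, hGend] at hsum
  linear_combination -hsum

/-- Evaluation of ₂F₁(a, −n; 2a | 2). -/
theorem gauss_2F1_at_two (n : ℕ) (a : ℂ)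
    (h : ∀ k ≤ n, poch (2 * a) k ≠ 0) :
    (Odd n →
      ∑ k ∈ Finset.range (n + 1),
          poch a k * poch (-(n : ℂ)) k / (poch (2 * a) k * (k.factorial : ℂ)) *
            (2 : ℂ) ^ k = 0) ∧
    (Even n → poch (1 / 2 + a) (n / 2) ≠ 0 →
      ∑ k ∈ Finset.range (n + 1),
          poch a k * poch (-(n : ℂ)) k / (poch (2 * a) k * (k.factorial : ℂ)) *
            (2 : ℂ) ^ k
        = poch (1 / 2) (n / 2) / poch (1 / 2 + a) (n / 2)) := by
  simp only [← Fnk_def]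
  revert h
  induction n using Nat.strong_induction_on with
  | _ n IH =>
    intro h
    match n with
    | 0 =>
      constructor
      · intro hodd; exact absurd hodd (by decide)
      · intro _ _
        simp [Fnk, poch_zero]
    | 1 =>
      constructor
      · intro _
        have h1 : poch (2 * a) 1 ≠ 0 := h 1 le_rfl
        have ha : a ≠ 0 := by
          intro h0
          apply h1
          simp [poch, h0]
        simp only [Finset.sum_range_succ, Finset.sum_range_zero, Fnk]
        simp [poch, Finset.prod_range_one]
        field_simp
        ring
      · intro heven; exact absurd heven (by decide)
    | (m + 2) =>
      have h' : ∀ k ≤ m, poch (2 * a) k ≠ 0 := fun k hk => h k (by omega)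
      obtain ⟨ihodd, iheven⟩ := IH m (by omega) h'
      have hrr : m + 2 + 1 = m + 3 := by omega
      rw [hrr]
      have hrec := S_rec m a h
      have hfac : poch (2 * a) (m + 2) ≠ 0 := h (m + 2) le_rfl
      rw [poch_succ] at hfac
      have h2am : (2 * a + (((m + 1 : ℕ)) : ℂ)) ≠ 0 := fun h0 => hfac (by rw [h0, mul_zero])
      have hcoef : (2 * a + (m : ℂ) + 1) ≠ 0 := by
        intro h0
        apply h2am
        push_cast
        linear_combination h0
      constructor
      · intro hodd
        have hoddm : Odd m := by
          rcases hodd with ⟨t, ht⟩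
          exact ⟨t - 1, by omega⟩
        have hS : ∑ k ∈ Finset.range (m + 1), Fnk a m k = 0 := ihodd hoddm
        rw [hS, mul_zero] at hrec
        rcases mul_eq_zero.mp hrec with h0 | h0
        · exact absurd h0 hcoef
        · exact h0
      · intro heven hden
        have hevenm : Even m := by
          rcases heven with ⟨t, ht⟩
          exact ⟨t - 1, by omega⟩
        have hdiv : (m + 2) / 2 = m / 2 + 1 := by omega
        rw [hdiv] at hden ⊢
        rw [poch_succ] at hden
        have hden1 : poch (1 / 2 + a) (m / 2) ≠ 0 := fun h0 => hden (by rw [h0, zero_mul])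
        have hden2 : (1 / 2 + a + ((m / 2 : ℕ) : ℂ)) ≠ 0 := fun h0 => hden (by rw [h0, mul_zero])
        have hS := iheven hevenm hden1
        rw [hS] at hrec
        obtain ⟨t, ht⟩ := hevenm
        have hmcast : ((m : ℕ) : ℂ) = 2 * ((m / 2 : ℕ) : ℂ) := by
          exact_mod_cast congrArg (Nat.cast (R := ℂ)) (by omega : m = 2 * (m / 2))
        have hScast : ∑ k ∈ Finset.range (m + 3), Fnk a (m + 2) k
            = ((m : ℂ) + 1) * (poch (1 / 2) (m / 2) / poch (1 / 2 + a) (m / 2))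
              / (2 * a + (m : ℂ) + 1) := by
          rw [eq_div_iff hcoef]
          linear_combination hrec
        rw [hScast, poch_succ, poch_succ]
        rw [hmcast] at hcoef ⊢
        field_simp
        ring
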